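/- Given a non-normal derivation Δ in a system of grounding Σ and a topmost maximal cut-segment (tmcs) σ¹ of Δ, suppose there is a cut-segment σ* in Δ with μ(σ*) = μ(σ¹) such that the lower edge of σ¹ is side-connected either with an occurrence in σ* or with a formula occurrence in Δ standing below the lower edge of σ*; then there is a tmcs σ² of Δ disjoint from σ¹. Moreover, if σ¹, σ², ..., σⁿ is a sequence of pairwise disjoint tmcs of Δ such that for every i < n the segment σ^{i+1} stands to σ^i in the above relation, and there is a cut-segment σ** standing to σⁿ in the above relation, then there is a tmcs σ^{n+1} of Δ disjoint from each σ^i (1 ≤ i ≤ n). -/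

import Mathlib

/-!  A formalization of d'Aragona's systems of grounding (Prawitz's theory of grounds).

* `LTerm`, `LFormula` : terms and formulas of the first-order background language `L`
  (with an absurdity constant `bot`).
* `GTerm` : typed terms of the (enriched, possibly expanded) Gentzen language of grounding:
  individual constants `konst i` naming closed atomic derivations, typed ground-variables
  `xi α i` (ξ^α_i), applied functional variables `fh α x i t` (h^α_{x,i}(t)) and
  `ff α i T` (f^α_i(T)), the primitive operational symbols `andI, orI, impI, allI, exI`,
  the non-primitive ones `andE, orE, impE, allE, exE, botE`, and (for expansions by further
  non-primitive operational symbols) `op i` together with application `app`.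
* `GForm` : formulas of the enriched language: `gr T α` ("T : α", i.e. Gr(T,α)),
  `equiv T U` ("T ≡ U"), `botG` (⊥^G) and the logical constants ×, +, ⊃, Π, 𝔈
  (`conj, disj, impl, pi, exi`), quantifying over `GVar`s (individual, typed, functional).
* `Valid base R Γ t` : the tree `t` is a correct derivation, from open assumptions in `Γ`,
  in the system of grounding determined by the atomic base (represented by the conclusion
  assignment `base : ℕ → LFormula` for the constants `konst i`) and by the set `R` of
  characteristic rules (rewrite equations for the additional non-primitive symbols).
  With `R = ∅` this is exactly the system GG of d'Aragona.
* `Deriv base R Γ A` : derivability in the system; `Deriv base ∅ Γ A` is `Γ ⊢_GG A`.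
-/

namespace Grounding

noncomputable section
open Classical

/-! ### The background language L -/

/-- Terms of the first-order background language. -/
inductive LTerm : Type
  | var : ℕ → LTerm
  | func : ℕ → List LTerm → LTerm

/-- `x` occurs (free) in the background term `t`. -/
inductive LTerm.FVar : ℕ → LTerm → Prop
  | var (x : ℕ) : LTerm.FVar x (.var x)
  | func {x f : ℕ} {args : List LTerm} {t : LTerm} :
      t ∈ args → LTerm.FVar x t → LTerm.FVar x (.func f args)

/-- The set of variables of a background term. -/
def LTerm.fv (t : LTerm) : Set ℕ := {x | LTerm.FVar x t}

/-- Substitution `t[u/x]` in background terms. -/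
def LTerm.subst : LTerm → ℕ → LTerm → LTerm
  | .var y, x, u => if y = x then u else .var y
  | .func f args, x, u => .func f (args.attach.map fun a => a.1.subst x u)
termination_by t _ _ => sizeOf t
decreasing_by
  have := List.sizeOf_lt_of_mem a.2
  simp only [LTerm.func.sizeOf_spec]
  omega

/-- Formulas of the first-order background language, with absurdity constant `bot`. -/
inductive LFormula : Type
  | atom : ℕ → List LTerm → LFormula
  | bot : LFormula
  | and : LFormula → LFormula → LFormula
  | or : LFormula → LFormula → LFormula
  | imp : LFormula → LFormula → LFormula
  | all : ℕ → LFormula → LFormula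
  | ex : ℕ → LFormula → LFormula

/-- Free variables of a background formula. -/
def LFormula.fv : LFormula → Set ℕ
  | .atom _ args => {x | ∃ t ∈ args, x ∈ t.fv}
  | .bot => ∅
  | .and a b => a.fv ∪ b.fv
  | .or a b => a.fv ∪ b.fv
  | .imp a b => a.fv ∪ b.fv
  | .all y a => a.fv \ {y}
  | .ex y a => a.fv \ {y}

/-- Substitution `α[t/x]` in background formulas (no capture-renaming; use `freeFor`). -/
def LFormula.subst : LFormula → ℕ → LTerm → LFormula
  | .atom r args, x, t => .atom r (args.map fun u => u.subst x t)
  | .bot, _, _ => .bot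
  | .and a b, x, t => .and (a.subst x t) (b.subst x t)
  | .or a b, x, t => .or (a.subst x t) (b.subst x t)
  | .imp a b, x, t => .imp (a.subst x t) (b.subst x t)
  | .all y a, x, t => if y = x then .all y a else .all y (a.subst x t)
  | .ex y a, x, t => if y = x then .ex y a else .ex y (a.subst x t)

/-- `t` is free for `x` in `α`. -/
def LTerm.freeFor (t : LTerm) (x : ℕ) : LFormula → Prop
  | .atom _ _ => True
  | .bot => True
  | .and a b => t.freeFor x a ∧ t.freeFor x b
  | .or a b => t.freeFor x a ∧ t.freeFor x b
  | .imp a b => t.freeFor x a ∧ t.freeFor x b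
  | .all y a => (x = y ∨ x ∉ a.fv) ∨ (y ∉ t.fv ∧ t.freeFor x a)
  | .ex y a => (x = y ∨ x ∉ a.fv) ∨ (y ∉ t.fv ∧ t.freeFor x a)

/-- The standard logical-complexity measure `k¹` of a background formula. -/
def LFormula.compl : LFormula → ℕ
  | .atom _ _ => 0
  | .bot => 0
  | .and a b => max a.compl b.compl + 1
  | .or a b => max a.compl b.compl + 1
  | .imp a b => max a.compl b.compl + 1
  | .all _ a => a.compl + 1
  | .ex _ a => a.compl + 1

/-! ### Terms of the (enriched, possibly expanded) language of grounding -/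

/-- Typed terms of the language of grounding. -/
inductive GTerm : Type
  | konst : ℕ → GTerm                                -- δ_i, naming closed atomic derivations
  | xi : LFormula → ℕ → GTerm                        -- typed ground-variables ξ^α_i
  | fh : LFormula → ℕ → ℕ → LTerm → GTerm            -- applied functional variables h^α_{x,i}(t)
  | ff : LFormula → ℕ → GTerm → GTerm                -- applied functional variables f^α_i(T)
  | op : ℕ → GTerm                                   -- additional non-primitive operational symbols
  | app : GTerm → GTerm → GTerm                      -- application (for the additional symbols)
  | andI : GTerm → GTerm → GTerm                     -- ∧I(T,U)
  | orI : Bool → LFormula → GTerm → GTerm            -- ∨I[α_i ▷ α₁∨α₂]; `true` = left injection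
  | impI : LFormula → ℕ → GTerm → GTerm              -- →I ξ^α_i (T), binding ξ^α_i
  | allI : ℕ → GTerm → GTerm                         -- ∀I x (T), binding x
  | exI : ℕ → LTerm → LFormula → GTerm → GTerm       -- ∃I[α(t/x) ▷ ∃x α](T)
  | andE : Bool → GTerm → GTerm                      -- ∧E,i(T), `true` = first projection
  | orE : LFormula → LFormula → ℕ → ℕ → GTerm → GTerm → GTerm → GTerm
      -- ∨E ξ^α_i ξ^β_j (T,U,Z), binding ξ^α_i in U and ξ^β_j in Z
  | impE : GTerm → GTerm → GTerm                     -- →E(T,U)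
  | allE : LTerm → GTerm → GTerm                     -- ∀E[∀xα ▷ α(t/x)](T)
  | exE : ℕ → LFormula → ℕ → GTerm → GTerm → GTerm   -- ∃E x ξ^{α}_j (T,U), binding x, ξ^α_j in U
  | botE : LFormula → GTerm → GTerm                  -- ⊥_α(T)

/-- Variables of the enriched language: individual, typed and functional. -/
inductive GVar : Type
  | ind : ℕ → GVar
  | xi : LFormula → ℕ → GVar
  | fh : LFormula → ℕ → ℕ → GVar
  | ff : LFormula → ℕ → GVar

/-- Free variables (of all three kinds) of a grounding term. -/
def GTerm.fvar : GTerm → Set GVar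
  | .konst _ => ∅
  | .xi γ j => {GVar.xi γ j} ∪ (GVar.ind '' γ.fv)
  | .fh γ y j t => {GVar.fh γ y j} ∪ (GVar.ind '' (t.fv ∪ (γ.fv \ {y})))
  | .ff γ j T => {GVar.ff γ j} ∪ (GVar.ind '' γ.fv) ∪ T.fvar
  | .op _ => ∅
  | .app T U => T.fvar ∪ U.fvar
  | .andI T U => T.fvar ∪ U.fvar
  | .orI _ γ T => (GVar.ind '' γ.fv) ∪ T.fvar
  | .impI γ j T => (GVar.ind '' γ.fv) ∪ (T.fvar \ {GVar.xi γ j})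
  | .allI y T => T.fvar \ {GVar.ind y}
  | .exI y t γ T => (GVar.ind '' (t.fv ∪ (γ.fv \ {y}))) ∪ T.fvar
  | .andE _ T => T.fvar
  | .orE γ δ i j T V W => T.fvar ∪ (V.fvar \ {GVar.xi γ i}) ∪ (W.fvar \ {GVar.xi δ j})
  | .impE T U => T.fvar ∪ U.fvar
  | .allE t T => (GVar.ind '' t.fv) ∪ T.fvar
  | .exE y γ j T U => T.fvar ∪ ((U.fvar \ {GVar.xi γ j}) \ {GVar.ind y})
  | .botE γ T => (GVar.ind '' γ.fv) ∪ T.fvar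

/-- `v` is a functional variable. -/
def GVar.isFun : GVar → Prop
  | .fh _ _ _ => True
  | .ff _ _ => True
  | _ => False

/-- The term contains no (free or applied) functional variables. -/
def GTerm.noFunVar (T : GTerm) : Prop := ∀ v ∈ T.fvar, ¬ v.isFun

/-- `T` is a term of the basic (non-enriched) language of grounding `Gen`
(no functional variables, no additional operational symbols). -/
def GTerm.isGen : GTerm → Prop
  | .konst _ => True
  | .xi _ _ => True
  | .fh _ _ _ _ => False
  | .ff _ _ _ => False
  | .op _ => False
  | .app _ _ => False
  | .andI T U => T.isGen ∧ U.isGen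
  | .orI _ _ T => T.isGen
  | .impI _ _ T => T.isGen
  | .allI _ T => T.isGen
  | .exI _ _ _ T => T.isGen
  | .andE _ T => T.isGen
  | .orE _ _ _ _ T U Z => T.isGen ∧ U.isGen ∧ Z.isGen
  | .impE T U => T.isGen ∧ U.isGen
  | .allE _ T => T.isGen
  | .exE _ _ _ T U => T.isGen ∧ U.isGen
  | .botE _ T => T.isGen

/-- Substitution of the individual variable `x` by the background term `u` in a grounding term. -/
def GTerm.substInd (x : ℕ) (u : LTerm) : GTerm → GTerm
  | .konst i => .konst i
  | .xi γ j => .xi (γ.subst x u) j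
  | .fh γ y j t => .fh (if y = x then γ else γ.subst x u) y j (t.subst x u)
  | .ff γ j T => .ff (γ.subst x u) j (T.substInd x u)
  | .op i => .op i
  | .app T U => .app (T.substInd x u) (U.substInd x u)
  | .andI T U => .andI (T.substInd x u) (U.substInd x u)
  | .orI b γ T => .orI b (γ.subst x u) (T.substInd x u)
  | .impI γ j T => .impI (γ.subst x u) j (T.substInd x u)
  | .allI y T => if y = x then .allI y T else .allI y (T.substInd x u)
  | .exI y t γ T => .exI y (t.subst x u) (if y = x then γ else γ.subst x u) (T.substInd x u)
  | .andE b T => .andE b (T.substInd x u)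
  | .orE γ δ i j T V W =>
      .orE (γ.subst x u) (δ.subst x u) i j (T.substInd x u) (V.substInd x u) (W.substInd x u)
  | .impE T U => .impE (T.substInd x u) (U.substInd x u)
  | .allE t T => .allE (t.subst x u) (T.substInd x u)
  | .exE y γ j T U =>
      .exE y (if y = x then γ else γ.subst x u) j (T.substInd x u)
        (if y = x then U else U.substInd x u)
  | .botE γ T => .botE (γ.subst x u) (T.substInd x u)

/-- Substitution of the typed variable ξ^α_i by the term `W` in a grounding term. -/
def GTerm.substXi : GTerm → LFormula → ℕ → GTerm → GTerm
  | .konst k, _, _, _ => .konst k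
  | .xi γ j, α, i, W => if γ = α ∧ j = i then W else .xi γ j
  | .fh γ y j t, _, _, _ => .fh γ y j t
  | .ff γ j T, α, i, W => .ff γ j (T.substXi α i W)
  | .op k, _, _, _ => .op k
  | .app T U, α, i, W => .app (T.substXi α i W) (U.substXi α i W)
  | .andI T U, α, i, W => .andI (T.substXi α i W) (U.substXi α i W)
  | .orI b γ T, α, i, W => .orI b γ (T.substXi α i W)
  | .impI γ j T, α, i, W => if γ = α ∧ j = i then .impI γ j T else .impI γ j (T.substXi α i W)
  | .allI y T, α, i, W => .allI y (T.substXi α i W)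
  | .exI y t γ T, α, i, W => .exI y t γ (T.substXi α i W)
  | .andE b T, α, i, W => .andE b (T.substXi α i W)
  | .orE γ δ k l T V Z, α, i, W =>
      .orE γ δ k l (T.substXi α i W)
        (if γ = α ∧ k = i then V else V.substXi α i W)
        (if δ = α ∧ l = i then Z else Z.substXi α i W)
  | .impE T U, α, i, W => .impE (T.substXi α i W) (U.substXi α i W)
  | .allE t T, α, i, W => .allE t (T.substXi α i W)
  | .exE y γ j T U, α, i, W =>
      .exE y γ j (T.substXi α i W) (if γ = α ∧ j = i then U else U.substXi α i W)
  | .botE γ T, α, i, W => .botE γ (T.substXi α i W)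

/-- Substitution of the functional variable h^β_{x,m} by the term `U`
(occurrences `h^β_{x,m}(t)` become `U[t/x]`). -/
def GTerm.substFH : GTerm → LFormula → ℕ → ℕ → GTerm → GTerm
  | .konst i, _, _, _, _ => .konst i
  | .xi γ j, _, _, _, _ => .xi γ j
  | .fh γ y j t, β, x, m, U => if γ = β ∧ y = x ∧ j = m then U.substInd x t else .fh γ y j t
  | .ff γ j T, β, x, m, U => .ff γ j (T.substFH β x m U)
  | .op i, _, _, _, _ => .op i
  | .app T V, β, x, m, U => .app (T.substFH β x m U) (V.substFH β x m U)
  | .andI T V, β, x, m, U => .andI (T.substFH β x m U) (V.substFH β x m U)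
  | .orI b γ T, β, x, m, U => .orI b γ (T.substFH β x m U)
  | .impI γ j T, β, x, m, U => .impI γ j (T.substFH β x m U)
  | .allI y T, β, x, m, U => .allI y (T.substFH β x m U)
  | .exI y t γ T, β, x, m, U => .exI y t γ (T.substFH β x m U)
  | .andE b T, β, x, m, U => .andE b (T.substFH β x m U)
  | .orE γ δ k l T V Z, β, x, m, U =>
      .orE γ δ k l (T.substFH β x m U) (V.substFH β x m U) (Z.substFH β x m U)
  | .impE T V, β, x, m, U => .impE (T.substFH β x m U) (V.substFH β x m U)
  | .allE t T, β, x, m, U => .allE t (T.substFH β x m U)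
  | .exE y γ j T V, β, x, m, U => .exE y γ j (T.substFH β x m U) (V.substFH β x m U)
  | .botE γ T, β, x, m, U => .botE γ (T.substFH β x m U)

/-- Substitution of the functional variable f^β_m by the term `U`
(whole applications `f^β_m(Z)` become `U`). -/
def GTerm.substFF : GTerm → LFormula → ℕ → GTerm → GTerm
  | .konst i, _, _, _ => .konst i
  | .xi γ j, _, _, _ => .xi γ j
  | .fh γ y j t, _, _, _ => .fh γ y j t
  | .ff γ j T, β, m, U => if γ = β ∧ j = m then U else .ff γ j (T.substFF β m U)
  | .op i, _, _, _ => .op i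
  | .app T V, β, m, U => .app (T.substFF β m U) (V.substFF β m U)
  | .andI T V, β, m, U => .andI (T.substFF β m U) (V.substFF β m U)
  | .orI b γ T, β, m, U => .orI b γ (T.substFF β m U)
  | .impI γ j T, β, m, U => .impI γ j (T.substFF β m U)
  | .allI y T, β, m, U => .allI y (T.substFF β m U)
  | .exI y t γ T, β, m, U => .exI y t γ (T.substFF β m U)
  | .andE b T, β, m, U => .andE b (T.substFF β m U)
  | .orE γ δ k l T V Z, β, m, U =>
      .orE γ δ k l (T.substFF β m U) (V.substFF β m U) (Z.substFF β m U)
  | .impE T V, β, m, U => .impE (T.substFF β m U) (V.substFF β m U)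
  | .allE t T, β, m, U => .allE t (T.substFF β m U)
  | .exE y γ j T V, β, m, U => .exE y γ j (T.substFF β m U) (V.substFF β m U)
  | .botE γ T, β, m, U => .botE γ (T.substFF β m U)

/-! ### Formulas of the enriched language of grounding -/

/-- Formulas of the enriched language of grounding: `gr T α` is the atomic formula
`Gr(T, α)` (written `T : α`), `equiv T U` is `T ≡ U`, `botG` is ⊥^G, and
`conj, disj, impl, pi, exi` are ×, +, ⊃, Π, 𝔈. -/
inductive GForm : Type
  | gr : GTerm → LFormula → GForm
  | equiv : GTerm → GTerm → GForm
  | botG : GForm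
  | conj : GForm → GForm → GForm
  | disj : GForm → GForm → GForm
  | impl : GForm → GForm → GForm
  | pi : GVar → GForm → GForm
  | exi : GVar → GForm → GForm

/-- Bi-implication `A ⇔ B`, an abbreviation for `(A ⊃ B) × (B ⊃ A)`. -/
def gIff (A B : GForm) : GForm := .conj (.impl A B) (.impl B A)

/-- Negation `¬^G A`, an abbreviation for `A ⊃ ⊥^G`. -/
def gNeg (A : GForm) : GForm := .impl A .botG

/-- Free variables of a formula of the enriched language. -/
def GForm.fvar : GForm → Set GVar
  | .gr T α => T.fvar ∪ (GVar.ind '' α.fv)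
  | .equiv T U => T.fvar ∪ U.fvar
  | .botG => ∅
  | .conj A B => A.fvar ∪ B.fvar
  | .disj A B => A.fvar ∪ B.fvar
  | .impl A B => A.fvar ∪ B.fvar
  | .pi v A => A.fvar \ {v}
  | .exi v A => A.fvar \ {v}

/-- Substitution of `x` by `u` in the type annotations of a variable. -/
def GVar.substInd (x : ℕ) (u : LTerm) : GVar → GVar
  | .ind y => .ind y
  | .xi γ j => .xi (γ.subst x u) j
  | .fh γ y j => .fh (if y = x then γ else γ.subst x u) y j
  | .ff γ j => .ff (γ.subst x u) j

/-- Substitution of the individual variable `x` by `u` in a formula. -/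
def GForm.substInd (x : ℕ) (u : LTerm) : GForm → GForm
  | .gr T α => .gr (T.substInd x u) (α.subst x u)
  | .equiv T U => .equiv (T.substInd x u) (U.substInd x u)
  | .botG => .botG
  | .conj A B => .conj (A.substInd x u) (B.substInd x u)
  | .disj A B => .disj (A.substInd x u) (B.substInd x u)
  | .impl A B => .impl (A.substInd x u) (B.substInd x u)
  | .pi v A => if v = .ind x then .pi v A else .pi (v.substInd x u) (A.substInd x u)
  | .exi v A => if v = .ind x then .exi v A else .exi (v.substInd x u) (A.substInd x u)

/-- Substitution of the typed variable ξ^α_i by the term `W` in a formula. -/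
def GForm.substXi (α : LFormula) (i : ℕ) (W : GTerm) : GForm → GForm
  | .gr T γ => .gr (T.substXi α i W) γ
  | .equiv T U => .equiv (T.substXi α i W) (U.substXi α i W)
  | .botG => .botG
  | .conj A B => .conj (A.substXi α i W) (B.substXi α i W)
  | .disj A B => .disj (A.substXi α i W) (B.substXi α i W)
  | .impl A B => .impl (A.substXi α i W) (B.substXi α i W)
  | .pi v A => if v = .xi α i then .pi v A else .pi v (A.substXi α i W)
  | .exi v A => if v = .xi α i then .exi v A else .exi v (A.substXi α i W)

/-- Substitution of the functional variable h^β_{x,m} by the term `U` in a formula. -/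
def GForm.substFH (β : LFormula) (x m : ℕ) (U : GTerm) : GForm → GForm
  | .gr T γ => .gr (T.substFH β x m U) γ
  | .equiv T V => .equiv (T.substFH β x m U) (V.substFH β x m U)
  | .botG => .botG
  | .conj A B => .conj (A.substFH β x m U) (B.substFH β x m U)
  | .disj A B => .disj (A.substFH β x m U) (B.substFH β x m U)
  | .impl A B => .impl (A.substFH β x m U) (B.substFH β x m U)
  | .pi v A => if v = .fh β x m then .pi v A else .pi v (A.substFH β x m U)
  | .exi v A => if v = .fh β x m then .exi v A else .exi v (A.substFH β x m U)

/-- Substitution of the functional variable f^β_m by the term `U` in a formula. -/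
def GForm.substFF (β : LFormula) (m : ℕ) (U : GTerm) : GForm → GForm
  | .gr T γ => .gr (T.substFF β m U) γ
  | .equiv T V => .equiv (T.substFF β m U) (V.substFF β m U)
  | .botG => .botG
  | .conj A B => .conj (A.substFF β m U) (B.substFF β m U)
  | .disj A B => .disj (A.substFF β m U) (B.substFF β m U)
  | .impl A B => .impl (A.substFF β m U) (B.substFF β m U)
  | .pi v A => if v = .ff β m then .pi v A else .pi v (A.substFF β m U)
  | .exi v A => if v = .ff β m then .exi v A else .exi v (A.substFF β m U)

/-! ### Typing of grounding terms -/

/-- `HasType base T α` : the grounding term `T` is of type `α` (relative to the atomic base,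
represented by the assignment `base` of conclusions to the constants naming closed atomic
derivations). -/
inductive HasType (base : ℕ → LFormula) : GTerm → LFormula → Prop
  | konst (i : ℕ) : HasType base (.konst i) (base i)
  | xi (γ : LFormula) (j : ℕ) : HasType base (.xi γ j) γ
  | fh (γ : LFormula) (y j : ℕ) (t : LTerm) : HasType base (.fh γ y j t) (γ.subst y t)
  | ff {T : GTerm} {δ : LFormula} (γ : LFormula) (j : ℕ) :
      HasType base T δ → HasType base (.ff γ j T) γ
  | andI {T U α β} : HasType base T α → HasType base U β → HasType base (.andI T U) (α.and β)
  | orIL {T α} (β) : HasType base T α → HasType base (.orI true β T) (α.or β)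
  | orIR {T β} (α) : HasType base T β → HasType base (.orI false α T) (α.or β)
  | impI {T β} (α : LFormula) (j : ℕ) : HasType base T β → HasType base (.impI α j T) (α.imp β)
  | allI {T α} (x : ℕ) : HasType base T α →
      (∀ γ j, GVar.xi γ j ∈ T.fvar → x ∉ γ.fv) → HasType base (.allI x T) (.all x α)
  | exI {T} (x : ℕ) (t : LTerm) (α : LFormula) :
      HasType base T (α.subst x t) → t.freeFor x α → HasType base (.exI x t α T) (.ex x α)
  | andEL {T α β} : HasType base T (.and α β) → HasType base (.andE true T) α
  | andER {T α β} : HasType base T (.and α β) → HasType base (.andE false T) β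
  | orE {T U Z α β γ} (i j : ℕ) : HasType base T (.or α β) → HasType base U γ →
      HasType base Z γ → HasType base (.orE α β i j T U Z) γ
  | impE {T U α β} : HasType base T (.imp α β) → HasType base U α → HasType base (.impE T U) β
  | allE {T α} (x : ℕ) (t : LTerm) : HasType base T (.all x α) → t.freeFor x α →
      HasType base (.allE t T) (α.subst x t)
  | exE {T U α β} (x j : ℕ) : HasType base T (.ex x α) → HasType base U β →
      (∀ γ k, GVar.xi γ k ∈ U.fvar → γ ≠ α → x ∉ γ.fv) → HasType base (.exE x α j T U) β
  | botE {T} (α : LFormula) : HasType base T .bot → HasType base (.botE α T) α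

/-! ### Derivations -/

/-- Names of the rules of a system of grounding. -/
inductive RuleTag : Type
  | assum | constAx
  | andIntro | orIntroL | orIntroR | impIntro | allIntro | exIntro
  | dAnd | dOr | dImp | dAll | dEx | botT
  | eqRefl | eqSymm | eqTrans | eqPres
  | congAndI | congAndIInv1 | congAndIInv2 | congAndE
  | congOrI | congOrIInv | congOrE
  | congImpI | congImpIInv | congImpE
  | congAllI | congAllIInv | congAllE
  | congExI | congExIInv | congExE
  | congBotE | congApp
  | rAnd | rOr | rImp | rAll | rEx
  | charR
  | timesI | timesE1 | timesE2 | plusI1 | plusI2 | plusE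
  | supI | supE | piI | piE | frakEI | frakEE | botGE
deriving DecidableEq

/-- Derivation trees: each node carries its conclusion, the rule applied,
and the list of the subderivations of the premises (major premise first). -/
inductive PTree : Type
  | node : GForm → RuleTag → List PTree → PTree

/-- Conclusion of a derivation tree. -/
def PTree.concl : PTree → GForm
  | .node A _ _ => A

/-- The rule applied at the root. -/
def PTree.tag : PTree → RuleTag
  | .node _ r _ => r

/-- `Valid base R Γ t` : the tree `t` is a correct derivation from open assumptions in `Γ`
in the system of grounding over the atomic base represented by `base`, with set `R` of
characteristic rules (premises/conclusion pairs, used for the rewrite equations of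
additional non-primitive operational symbols).  With `R = ∅` this is the system `GG`. -/
inductive Valid (base : ℕ → LFormula) (R : Set (List GForm × GForm)) : Set GForm → PTree → Prop
  -- assumption rule
  | assum {Γ A} : A ∈ Γ → Valid base R Γ (.node A .assum [])
  -- axioms δ : α for the constants naming closed atomic derivations with conclusion α
  | constAx {Γ} (i : ℕ) : Valid base R Γ (.node (.gr (.konst i) (base i)) .constAx [])
  -- type introductions
  | andIntro {Γ t u T U α β} : Valid base R Γ t → Valid base R Γ u →
      t.concl = .gr T α → u.concl = .gr U β →
      Valid base R Γ (.node (.gr (.andI T U) (.and α β)) .andIntro [t, u])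
  | orIntroL {Γ t T α β} : Valid base R Γ t → t.concl = .gr T α →
      Valid base R Γ (.node (.gr (.orI true β T) (.or α β)) .orIntroL [t])
  | orIntroR {Γ t T α β} : Valid base R Γ t → t.concl = .gr T β →
      Valid base R Γ (.node (.gr (.orI false α T) (.or α β)) .orIntroR [t])
  | impIntro {Γ t T α β i} :
      Valid base R (insert (.gr (.xi α i) α) Γ) t → t.concl = .gr T β →
      (∀ B ∈ Γ, GVar.xi α i ∉ B.fvar) →
      Valid base R Γ (.node (.gr (.impI α i T) (.imp α β)) .impIntro [t])
  | allIntro {Γ t T α x} : Valid base R Γ t → t.concl = .gr T α →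
      (∀ B ∈ Γ, GVar.ind x ∉ B.fvar) →
      Valid base R Γ (.node (.gr (.allI x T) (.all x α)) .allIntro [t])
  | exIntro {Γ t T α x u} : Valid base R Γ t → t.concl = .gr T (α.subst x u) →
      u.freeFor x α →
      Valid base R Γ (.node (.gr (.exI x u α T) (.ex x α)) .exIntro [t])
  -- generalized type eliminations
  | dAnd {Γ t s T α β i j A} :
      Valid base R Γ t → t.concl = .gr T (.and α β) →
      Valid base R (insert (.equiv T (.andI (.xi α i) (.xi β j)))
          (insert (.gr (.xi α i) α) (insert (.gr (.xi β j) β) Γ))) s →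
      s.concl = A →
      (∀ B ∈ Γ, GVar.xi α i ∉ B.fvar ∧ GVar.xi β j ∉ B.fvar) →
      GVar.xi α i ∉ A.fvar → GVar.xi β j ∉ A.fvar →
      GVar.xi α i ∉ T.fvar → GVar.xi β j ∉ T.fvar →
      Valid base R Γ (.node A .dAnd [t, s])
  | dOr {Γ t s₁ s₂ T α β i j A} :
      Valid base R Γ t → t.concl = .gr T (.or α β) →
      Valid base R (insert (.equiv T (.orI true β (.xi α i))) (insert (.gr (.xi α i) α) Γ)) s₁ →
      Valid base R (insert (.equiv T (.orI false α (.xi β j))) (insert (.gr (.xi β j) β) Γ)) s₂ →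
      s₁.concl = A → s₂.concl = A →
      (∀ B ∈ Γ, GVar.xi α i ∉ B.fvar ∧ GVar.xi β j ∉ B.fvar) →
      GVar.xi α i ∉ A.fvar → GVar.xi β j ∉ A.fvar →
      GVar.xi α i ∉ T.fvar → GVar.xi β j ∉ T.fvar →
      Valid base R Γ (.node A .dOr [t, s₁, s₂])
  | dImp {Γ t s T α β k m A} :
      Valid base R Γ t → t.concl = .gr T (.imp α β) →
      Valid base R (insert (.equiv T (.impI α k (.ff β m (.xi α k))))
          (insert (.pi (.xi α k) (.impl (.gr (.xi α k) α) (.gr (.ff β m (.xi α k)) β))) Γ)) s →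
      s.concl = A →
      (∀ B ∈ Γ, GVar.ff β m ∉ B.fvar) → GVar.ff β m ∉ A.fvar → GVar.ff β m ∉ T.fvar →
      Valid base R Γ (.node A .dImp [t, s])
  | dAll {Γ t s T α x m A} :
      Valid base R Γ t → t.concl = .gr T (.all x α) →
      Valid base R (insert (.equiv T (.allI x (.fh α x m (.var x))))
          (insert (.pi (.ind x) (.gr (.fh α x m (.var x)) α)) Γ)) s →
      s.concl = A →
      (∀ B ∈ Γ, GVar.fh α x m ∉ B.fvar) → GVar.fh α x m ∉ A.fvar → GVar.fh α x m ∉ T.fvar →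
      Valid base R Γ (.node A .dAll [t, s])
  | dEx {Γ t s T α x j A} :
      Valid base R Γ t → t.concl = .gr T (.ex x α) →
      Valid base R (insert (.equiv T (.exI x (.var x) α (.xi α j)))
          (insert (.gr (.xi α j) α) Γ)) s →
      s.concl = A →
      (∀ B ∈ Γ, GVar.ind x ∉ B.fvar ∧ GVar.xi α j ∉ B.fvar) →
      GVar.ind x ∉ A.fvar → GVar.xi α j ∉ A.fvar → GVar.xi α j ∉ T.fvar →
      Valid base R Γ (.node A .dEx [t, s])
  -- the rule for the type ⊥
  | botT {Γ t T} : Valid base R Γ t → t.concl = .gr T .bot →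
      Valid base R Γ (.node .botG .botT [t])
  -- equivalence rules: reflexivity, symmetry, transitivity, preservation of denotation
  | eqRefl {Γ} (T : GTerm) : Valid base R Γ (.node (.equiv T T) .eqRefl [])
  | eqSymm {Γ t T U} : Valid base R Γ t → t.concl = .equiv T U →
      Valid base R Γ (.node (.equiv U T) .eqSymm [t])
  | eqTrans {Γ t s T U W} : Valid base R Γ t → Valid base R Γ s →
      t.concl = .equiv T U → s.concl = .equiv U W →
      Valid base R Γ (.node (.equiv T W) .eqTrans [t, s])
  | eqPres {Γ t s T U α} : Valid base R Γ t → Valid base R Γ s →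
      t.concl = .equiv T U → s.concl = .gr U α →
      Valid base R Γ (.node (.gr T α) .eqPres [t, s])
  -- congruence: operational symbols applied to equivalent terms yield equivalent terms
  | congAndI {Γ t s T U V W} : Valid base R Γ t → Valid base R Γ s →
      t.concl = .equiv T U → s.concl = .equiv V W →
      Valid base R Γ (.node (.equiv (.andI T V) (.andI U W)) .congAndI [t, s])
  | congAndIInv1 {Γ t T₁ T₂ U₁ U₂} : Valid base R Γ t →
      t.concl = .equiv (.andI T₁ T₂) (.andI U₁ U₂) →
      Valid base R Γ (.node (.equiv T₁ U₁) .congAndIInv1 [t])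
  | congAndIInv2 {Γ t T₁ T₂ U₁ U₂} : Valid base R Γ t →
      t.concl = .equiv (.andI T₁ T₂) (.andI U₁ U₂) →
      Valid base R Γ (.node (.equiv T₂ U₂) .congAndIInv2 [t])
  | congAndE {Γ t T U} (b : Bool) : Valid base R Γ t → t.concl = .equiv T U →
      Valid base R Γ (.node (.equiv (.andE b T) (.andE b U)) .congAndE [t])
  | congOrI {Γ t T U} (b : Bool) (γ : LFormula) : Valid base R Γ t → t.concl = .equiv T U →
      Valid base R Γ (.node (.equiv (.orI b γ T) (.orI b γ U)) .congOrI [t])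
  | congOrIInv {Γ t T U b γ} : Valid base R Γ t →
      t.concl = .equiv (.orI b γ T) (.orI b γ U) →
      Valid base R Γ (.node (.equiv T U) .congOrIInv [t])
  | congOrE {Γ t s₁ s₂ T U V₁ V₂ W₁ W₂} (α β : LFormula) (i j : ℕ) :
      Valid base R Γ t → Valid base R Γ s₁ → Valid base R Γ s₂ →
      t.concl = .equiv T U → s₁.concl = .equiv V₁ V₂ → s₂.concl = .equiv W₁ W₂ →
      Valid base R Γ
        (.node (.equiv (.orE α β i j T V₁ W₁) (.orE α β i j U V₂ W₂)) .congOrE [t, s₁, s₂])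
  | congImpI {Γ t T U} (α : LFormula) (i : ℕ) : Valid base R Γ t → t.concl = .equiv T U →
      Valid base R Γ (.node (.equiv (.impI α i T) (.impI α i U)) .congImpI [t])
  | congImpIInv {Γ t T U α i} : Valid base R Γ t →
      t.concl = .equiv (.impI α i T) (.impI α i U) →
      Valid base R Γ (.node (.equiv T U) .congImpIInv [t])
  | congImpE {Γ t s T₁ T₂ U₁ U₂} : Valid base R Γ t → Valid base R Γ s →
      t.concl = .equiv T₁ T₂ → s.concl = .equiv U₁ U₂ →
      Valid base R Γ (.node (.equiv (.impE T₁ U₁) (.impE T₂ U₂)) .congImpE [t, s])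
  | congAllI {Γ t T U} (x : ℕ) : Valid base R Γ t → t.concl = .equiv T U →
      Valid base R Γ (.node (.equiv (.allI x T) (.allI x U)) .congAllI [t])
  | congAllIInv {Γ t T U x} : Valid base R Γ t →
      t.concl = .equiv (.allI x T) (.allI x U) →
      Valid base R Γ (.node (.equiv T U) .congAllIInv [t])
  | congAllE {Γ t T U} (u : LTerm) : Valid base R Γ t → t.concl = .equiv T U →
      Valid base R Γ (.node (.equiv (.allE u T) (.allE u U)) .congAllE [t])
  | congExI {Γ t T U} (x : ℕ) (u : LTerm) (α : LFormula) :
      Valid base R Γ t → t.concl = .equiv T U →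
      Valid base R Γ (.node (.equiv (.exI x u α T) (.exI x u α U)) .congExI [t])
  | congExIInv {Γ t T U x u α} : Valid base R Γ t →
      t.concl = .equiv (.exI x u α T) (.exI x u α U) →
      Valid base R Γ (.node (.equiv T U) .congExIInv [t])
  | congExE {Γ t s T U V W} (x : ℕ) (α : LFormula) (j : ℕ) :
      Valid base R Γ t → Valid base R Γ s →
      t.concl = .equiv T U → s.concl = .equiv V W →
      Valid base R Γ (.node (.equiv (.exE x α j T V) (.exE x α j U W)) .congExE [t, s])
  | congBotE {Γ t T U} (α : LFormula) : Valid base R Γ t → t.concl = .equiv T U →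
      Valid base R Γ (.node (.equiv (.botE α T) (.botE α U)) .congBotE [t])
  | congApp {Γ t s T U V W} : Valid base R Γ t → Valid base R Γ s →
      t.concl = .equiv T U → s.concl = .equiv V W →
      Valid base R Γ (.node (.equiv (.app T V) (.app U W)) .congApp [t, s])
  -- rewrite equations for computing the non-canonical terms
  | rAnd {Γ} (b : Bool) (T U : GTerm) :
      Valid base R Γ (.node (.equiv (.andE b (.andI T U)) (cond b T U)) .rAnd [])
  | rOrL {Γ} (α β : LFormula) (i j : ℕ) (T U Z : GTerm) :
      Valid base R Γ
        (.node (.equiv (.orE α β i j (.orI true β T) U Z) (U.substXi α i T)) .rOr [])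
  | rOrR {Γ} (α β : LFormula) (i j : ℕ) (T U Z : GTerm) :
      Valid base R Γ
        (.node (.equiv (.orE α β i j (.orI false α T) U Z) (Z.substXi β j T)) .rOr [])
  | rImp {Γ} (α : LFormula) (k : ℕ) (T U : GTerm) :
      Valid base R Γ (.node (.equiv (.impE (.impI α k T) U) (T.substXi α k U)) .rImp [])
  | rAll {Γ} (x : ℕ) (u : LTerm) (T : GTerm) :
      Valid base R Γ (.node (.equiv (.allE u (.allI x T)) (T.substInd x u)) .rAll [])
  | rEx {Γ} (x : ℕ) (u : LTerm) (α : LFormula) (j : ℕ) (T U : GTerm) :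
      Valid base R Γ
        (.node (.equiv (.exE x α j (.exI x u α T) U)
          ((U.substInd x u).substXi (α.subst x u) j T)) .rEx [])
  -- characteristic rules of the system (for expansions of GG)
  | charRule {Γ prems concl} {ts : List PTree} :
      (prems, concl) ∈ R → ts.length = prems.length →
      (∀ (k : ℕ) (t : PTree) (P : GForm), ts[k]? = some t → prems[k]? = some P →
        Valid base R Γ t) →
      (∀ (k : ℕ) (t : PTree) (P : GForm), ts[k]? = some t → prems[k]? = some P →
        t.concl = P) →
      Valid base R Γ (.node concl .charR ts)
  -- intuitionistic logic: ×, +, ⊃, Π, 𝔈, ⊥^G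
  | timesI {Γ t s A B} : Valid base R Γ t → Valid base R Γ s → t.concl = A → s.concl = B →
      Valid base R Γ (.node (.conj A B) .timesI [t, s])
  | timesE1 {Γ t A B} : Valid base R Γ t → t.concl = .conj A B →
      Valid base R Γ (.node A .timesE1 [t])
  | timesE2 {Γ t A B} : Valid base R Γ t → t.concl = .conj A B →
      Valid base R Γ (.node B .timesE2 [t])
  | plusI1 {Γ t A} (B : GForm) : Valid base R Γ t → t.concl = A →
      Valid base R Γ (.node (.disj A B) .plusI1 [t])
  | plusI2 {Γ t B} (A : GForm) : Valid base R Γ t → t.concl = B →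
      Valid base R Γ (.node (.disj A B) .plusI2 [t])
  | plusE {Γ t s₁ s₂ A B C} : Valid base R Γ t → t.concl = .disj A B →
      Valid base R (insert A Γ) s₁ → s₁.concl = C →
      Valid base R (insert B Γ) s₂ → s₂.concl = C →
      Valid base R Γ (.node C .plusE [t, s₁, s₂])
  | supI {Γ t A B} : Valid base R (insert A Γ) t → t.concl = B →
      Valid base R Γ (.node (.impl A B) .supI [t])
  | supE {Γ t s A B} : Valid base R Γ t → Valid base R Γ s →
      t.concl = .impl A B → s.concl = A →
      Valid base R Γ (.node B .supE [t, s])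
  | piI {Γ t A} (v : GVar) : Valid base R Γ t → t.concl = A →
      (∀ C ∈ Γ, v ∉ C.fvar) →
      Valid base R Γ (.node (.pi v A) .piI [t])
  | piEInd {Γ t A x u} : Valid base R Γ t → t.concl = .pi (.ind x) A →
      Valid base R Γ (.node (A.substInd x u) .piE [t])
  | piEXi {Γ t A α i τ} : Valid base R Γ t → t.concl = .pi (.xi α i) A →
      HasType base τ α → τ.noFunVar →
      Valid base R Γ (.node (A.substXi α i τ) .piE [t])
  | piEFh {Γ t A β x m τ} : Valid base R Γ t → t.concl = .pi (.fh β x m) A →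
      HasType base τ β → τ.noFunVar → (∀ γ j, GVar.xi γ j ∈ τ.fvar → x ∉ γ.fv) →
      Valid base R Γ (.node (A.substFH β x m τ) .piE [t])
  | piEFf {Γ t A β m τ} : Valid base R Γ t → t.concl = .pi (.ff β m) A →
      HasType base τ β → τ.noFunVar →
      Valid base R Γ (.node (A.substFF β m τ) .piE [t])
  | frakEIInd {Γ t A x u} : Valid base R Γ t → t.concl = A.substInd x u →
      Valid base R Γ (.node (.exi (.ind x) A) .frakEI [t])
  | frakEIXi {Γ t A α i τ} : Valid base R Γ t → t.concl = A.substXi α i τ →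
      HasType base τ α → τ.noFunVar →
      Valid base R Γ (.node (.exi (.xi α i) A) .frakEI [t])
  | frakEIFh {Γ t A β x m τ} : Valid base R Γ t → t.concl = A.substFH β x m τ →
      HasType base τ β → τ.noFunVar → (∀ γ j, GVar.xi γ j ∈ τ.fvar → x ∉ γ.fv) →
      Valid base R Γ (.node (.exi (.fh β x m) A) .frakEI [t])
  | frakEIFf {Γ t A β m τ} : Valid base R Γ t → t.concl = A.substFF β m τ →
      HasType base τ β → τ.noFunVar →
      Valid base R Γ (.node (.exi (.ff β m) A) .frakEI [t])
  | frakEE {Γ t s A B} (v : GVar) : Valid base R Γ t → t.concl = .exi v A →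
      Valid base R (insert A Γ) s → s.concl = B →
      (∀ C ∈ Γ, v ∉ C.fvar) → v ∉ B.fvar →
      Valid base R Γ (.node B .frakEE [t, s])
  | botGE {Γ t} (A : GForm) : Valid base R Γ t → t.concl = .botG →
      Valid base R Γ (.node A .botGE [t])

/-- `Deriv base R Γ A` : the formula `A` is derivable from assumptions `Γ` in the system
of grounding determined by `base` and `R`.  `Deriv base ∅ Γ A` is derivability in `GG`,
i.e. `Γ ⊢_GG A`. -/
def Deriv (base : ℕ → LFormula) (R : Set (List GForm × GForm)) (Γ : Set GForm)
    (A : GForm) : Prop :=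
  ∃ t : PTree, Valid base R Γ t ∧ t.concl = A

/-! ### Part B: occurrences, cut-segments, measures, reductions and normal form -/

/-- Positions (occurrences) in a derivation tree: a path from the root (the conclusion,
standing lowest) to a node; longer positions stand higher in the derivation. -/
abbrev Pos := List ℕ

/-- The subtree of `t` at position `p` (if any). -/
def PTree.sub : PTree → Pos → Option PTree
  | t, [] => some t
  | .node _ _ l, k :: p => (l[k]?).bind fun c => PTree.sub c p
termination_by t p => p.length

/-- The formula occurring at position `p`. -/
def formulaAt (Δ : PTree) (p : Pos) : Option GForm := (Δ.sub p).map PTree.concl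

/-- The rule applied at position `p`. -/
def tagAt (Δ : PTree) (p : Pos) : Option RuleTag := (Δ.sub p).map PTree.tag

/-- The occurrence `p` stands above the occurrence `q` (`q` is a proper prefix of `p`;
conclusions stand at the bottom). -/
def StandsAbove (p q : Pos) : Prop := q ≠ p ∧ q <+: p

/-- Two occurrences are side-connected iff they are premises of one and the same
inference. -/
def SideConnected (Δ : PTree) (p q : Pos) : Prop :=
  (formulaAt Δ p).isSome ∧ (formulaAt Δ q).isSome ∧
  ∃ r k m, k ≠ m ∧ p = r ++ [k] ∧ q = r ++ [m]

/-- `r` is a type introduction rule. -/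
def RuleTag.isTypeIntro (r : RuleTag) : Prop :=
  r = .andIntro ∨ r = .orIntroL ∨ r = .orIntroR ∨ r = .impIntro ∨ r = .allIntro ∨ r = .exIntro

/-- `r` is an introduction rule for a logical constant of the enriched language. -/
def RuleTag.isLogicIntro (r : RuleTag) : Prop :=
  r = .timesI ∨ r = .plusI1 ∨ r = .plusI2 ∨ r = .supI ∨ r = .piI ∨ r = .frakEI

/-- `r` is a generalized type elimination rule. -/
def RuleTag.isTypeElim (r : RuleTag) : Prop :=
  r = .dAnd ∨ r = .dOr ∨ r = .dImp ∨ r = .dAll ∨ r = .dEx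

/-- `r` is one of (+_E), (𝔈_E) or a type elimination (the rules through which segments
may pass). -/
def RuleTag.isPermElim (r : RuleTag) : Prop :=
  r = .plusE ∨ r = .frakEE ∨ r.isTypeElim

/-- `r` is an elimination rule (with its major premise as first premise). -/
def RuleTag.isMajorElim (r : RuleTag) : Prop :=
  r = .timesE1 ∨ r = .timesE2 ∨ r = .plusE ∨ r = .supE ∨ r = .piE ∨ r = .frakEE ∨
    r.isTypeElim

/-- The elimination rule `re` corresponds to the introduction rule `ri`
(D_s for sI, (κ_E) for (κ_I)). -/
def RuleTag.matchIE : RuleTag → RuleTag → Prop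
  | .andIntro, .dAnd => True
  | .orIntroL, .dOr => True
  | .orIntroR, .dOr => True
  | .impIntro, .dImp => True
  | .allIntro, .dAll => True
  | .exIntro, .dEx => True
  | .timesI, .timesE1 => True
  | .timesI, .timesE2 => True
  | .plusI1, .plusE => True
  | .plusI2, .plusE => True
  | .supI, .supE => True
  | .piI, .piE => True
  | .frakEI, .frakEE => True
  | _, _ => False

/-- `IsCutSeg Δ σ A` : `σ` (listed from the upper edge down to the lower edge) is a
cut-segment of `Δ` with formula `A`: a sequence of occurrences of `A` whose first member is
the conclusion of a type introduction or of a logical introduction, each following member is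
the conclusion of (+_E), (𝔈_E) or a type elimination of which the preceding member is a
minor premise, and whose last member is the major premise of the elimination corresponding
to the initial introduction. -/
def IsCutSeg (Δ : PTree) (σ : List Pos) (A : GForm) : Prop :=
  σ ≠ [] ∧
  (∀ p ∈ σ, formulaAt Δ p = some A) ∧
  (∃ p ri, σ.head? = some p ∧ tagAt Δ p = some ri ∧ (ri.isTypeIntro ∨ ri.isLogicIntro) ∧
    ∃ q pr re, σ.getLast? = some q ∧ q = pr ++ [0] ∧ tagAt Δ pr = some re ∧
      ri.matchIE re) ∧
  List.Chain' (fun p q => (∃ k, k ≠ 0 ∧ q ++ [k] = p) ∧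
    ∃ r', tagAt Δ q = some r' ∧ r'.isPermElim) σ

/-- Lexicographic ("alphabetic") strict order on measures. -/
def mlt (a b : ℕ × ℕ) : Prop := a.1 < b.1 ∨ (a.1 = b.1 ∧ a.2 < b.2)

/-- Lexicographic order on measures (reflexive). -/
def mle (a b : ℕ × ℕ) : Prop := a = b ∨ mlt a b

/-- The type-measure τ(A): the maximum of k¹(α) over the subformulas `U : α` of `A`
(0 if there are none). -/
def GForm.tmeas : GForm → ℕ
  | .gr _ α => α.compl
  | .equiv _ _ => 0
  | .botG => 0
  | .conj A B => max A.tmeas B.tmeas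
  | .disj A B => max A.tmeas B.tmeas
  | .impl A B => max A.tmeas B.tmeas
  | .pi _ A => A.tmeas
  | .exi _ A => A.tmeas

/-- The logical measure k²(A) of a formula of the enriched language. -/
def GForm.lmeas : GForm → ℕ
  | .gr _ _ => 0
  | .equiv _ _ => 0
  | .botG => 0
  | .conj A B => max A.lmeas B.lmeas + 1
  | .disj A B => max A.lmeas B.lmeas + 1
  | .impl A B => max A.lmeas B.lmeas + 1
  | .pi _ A => A.lmeas + 1
  | .exi _ A => A.lmeas + 1

/-- The measure μ(A) = (τ(A), k²(A)). -/
def GForm.meas (A : GForm) : ℕ × ℕ := (A.tmeas, A.lmeas)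

/-- M_Δ : the set of the measures of the cut-segments of Δ. -/
def measSet (Δ : PTree) : Set (ℕ × ℕ) := {m | ∃ σ A, IsCutSeg Δ σ A ∧ GForm.meas A = m}

/-- `m` is MAX(M_Δ) (with MAX(∅) = (0,0)). -/
def IsMaxMeas (Δ : PTree) (m : ℕ × ℕ) : Prop :=
  (m ∈ measSet Δ ∨ (measSet Δ = ∅ ∧ m = (0, 0))) ∧ ∀ m' ∈ measSet Δ, mle m' m

/-- `DegreeIs Δ d` : the degree of Δ is `d = (MAX(M_Δ), n)`, where `n` is the sum of the
lengths of the cut-segments of Δ of measure MAX(M_Δ). -/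
def DegreeIs (Δ : PTree) (d : (ℕ × ℕ) × ℕ) : Prop :=
  IsMaxMeas Δ d.1 ∧
  ∃ s : Finset (List Pos),
    (∀ σ, σ ∈ s ↔ ∃ A, IsCutSeg Δ σ A ∧ GForm.meas A = d.1) ∧
    d.2 = s.sum List.length

/-- Lexicographic strict order on degrees. -/
def dlt (d e : (ℕ × ℕ) × ℕ) : Prop := mlt d.1 e.1 ∨ (d.1 = e.1 ∧ d.2 < e.2)

/-- Δ is non-normal iff it contains a cut-segment (equivalently, iff its degree is not
((0,0),0)). -/
def NonNormal (Δ : PTree) : Prop := ∃ σ A, IsCutSeg Δ σ A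

/-- A topmost maximal cut-segment (tmcs): a cut-segment of maximal measure such that no
cut-segment of equal measure has its lower edge above its upper edge. -/
def IsTmcs (Δ : PTree) (σ : List Pos) (A : GForm) : Prop :=
  IsCutSeg Δ σ A ∧ IsMaxMeas Δ (GForm.meas A) ∧
  ∀ σ' A', IsCutSeg Δ σ' A' → GForm.meas A' = GForm.meas A →
    ∀ p q, σ'.getLast? = some p → σ.head? = some q → ¬ StandsAbove p q

/-- Two cut-segments are disjoint iff they share no occurrence. -/
def SegDisjoint (σ₁ σ₂ : List Pos) : Prop := ∀ p ∈ σ₁, p ∉ σ₂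

/-- `σ₂` stands to the right of `σ₁`: the lower edge of `σ₁` is side-connected either with
an occurrence in `σ₂` or with a formula occurrence of Δ standing below the lower edge
of `σ₂`. -/
def RightRel (Δ : PTree) (σ₁ σ₂ : List Pos) : Prop :=
  ∃ p, σ₁.getLast? = some p ∧
    ((∃ q ∈ σ₂, SideConnected Δ p q) ∨
     (∃ q r, σ₂.getLast? = some r ∧ StandsAbove r q ∧ SideConnected Δ p q))

/-- Map a function over all the formulas occurring in a derivation tree
(used for substitution throughout a derivation). -/
def PTree.mapF (f : GForm → GForm) : PTree → PTree
  | .node A r l => .node (f A) r (l.attach.map fun c => c.1.mapF f)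
termination_by t => sizeOf t
decreasing_by
  have := List.sizeOf_lt_of_mem c.2
  simp only [PTree.node.sizeOf_spec]
  omega

/-- Replace the assumption leaves with formula `A` by the derivation `d`. -/
def PTree.replaceAssm : PTree → GForm → PTree → PTree
  | .node B r l, A, d =>
      if r = RuleTag.assum ∧ l = [] ∧ B = A then d
      else .node B r (l.attach.map fun c => c.1.replaceAssm A d)
termination_by t _ _ => sizeOf t
decreasing_by
  have := List.sizeOf_lt_of_mem c.2
  simp only [PTree.node.sizeOf_spec]
  omega

/-- The one-node derivation consisting of an application of the reflexivity axiom to T. -/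
def reflLeaf (T : GTerm) : PTree := .node (.equiv T T) .eqRefl []

/-- `Red1 Δ Δ'` : `Δ'` is obtained from `Δ` by one application of a reduction function for
typing maximal formulas (TMF) or for logically maximal formulas (LMF), or of a permutation
function, possibly inside a subderivation. -/
inductive Red1 : PTree → PTree → Prop
  -- reduction inside a subderivation
  | congr {A r l₁ l₂ t t'} : Red1 t t' →
      Red1 (.node A r (l₁ ++ t :: l₂)) (.node A r (l₁ ++ t' :: l₂))
  -- TMF reductions
  | tmfAnd {A : GForm} {α β : LFormula} {T U : GTerm} {i j : ℕ} {d₁ d₂ minor : PTree} :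
      Red1 (.node A .dAnd [.node (.gr (.andI T U) (.and α β)) .andIntro [d₁, d₂], minor])
        ((((minor.mapF fun B => (B.substXi α i T).substXi β j U).replaceAssm
            (.equiv (.andI T U) (.andI T U)) (reflLeaf (.andI T U))).replaceAssm
            (.gr T α) d₁).replaceAssm (.gr U β) d₂)
  | tmfOrL {A : GForm} {α β : LFormula} {T : GTerm} {i : ℕ} {d₁ m₁ m₂ : PTree} :
      Red1 (.node A .dOr [.node (.gr (.orI true β T) (.or α β)) .orIntroL [d₁], m₁, m₂])
        (((m₁.mapF fun B => B.substXi α i T).replaceAssm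
            (.equiv (.orI true β T) (.orI true β T)) (reflLeaf (.orI true β T))).replaceAssm
            (.gr T α) d₁)
  | tmfOrR {A : GForm} {α β : LFormula} {T : GTerm} {j : ℕ} {d₁ m₁ m₂ : PTree} :
      Red1 (.node A .dOr [.node (.gr (.orI false α T) (.or α β)) .orIntroR [d₁], m₁, m₂])
        (((m₂.mapF fun B => B.substXi β j T).replaceAssm
            (.equiv (.orI false α T) (.orI false α T)) (reflLeaf (.orI false α T))).replaceAssm
            (.gr T β) d₁)
  | tmfImp {A : GForm} {α β : LFormula} {T : GTerm} {k m : ℕ} {d₁ minor : PTree} :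
      Red1 (.node A .dImp [.node (.gr (.impI α k T) (.imp α β)) .impIntro [d₁], minor])
        (((minor.mapF fun B => B.substFF β m T).replaceAssm
            (.equiv (.impI α k T) (.impI α k T)) (reflLeaf (.impI α k T))).replaceAssm
            (.pi (.xi α k) (.impl (.gr (.xi α k) α) (.gr T β)))
            (.node (.pi (.xi α k) (.impl (.gr (.xi α k) α) (.gr T β))) .piI
              [.node (.impl (.gr (.xi α k) α) (.gr T β)) .supI [d₁]]))
  | tmfAll {A : GForm} {α : LFormula} {x m : ℕ} {T : GTerm} {d₁ minor : PTree} :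
      Red1 (.node A .dAll [.node (.gr (.allI x T) (.all x α)) .allIntro [d₁], minor])
        (((minor.mapF fun B => B.substFH α x m T).replaceAssm
            (.equiv (.allI x T) (.allI x T)) (reflLeaf (.allI x T))).replaceAssm
            (.pi (.ind x) (.gr T α)) (.node (.pi (.ind x) (.gr T α)) .piI [d₁]))
  | tmfEx {A : GForm} {α : LFormula} {x j : ℕ} {u : LTerm} {T : GTerm} {d₁ minor : PTree} :
      Red1 (.node A .dEx [.node (.gr (.exI x u α T) (.ex x α)) .exIntro [d₁], minor])
        (((minor.mapF fun B => (B.substInd x u).substXi (α.subst x u) j T).replaceAssm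
            (.equiv (.exI x u α T) (.exI x u α T)) (reflLeaf (.exI x u α T))).replaceAssm
            (.gr T (α.subst x u)) d₁)
  -- LMF reductions
  | lmfTimes1 {A B : GForm} {d₁ d₂ : PTree} :
      Red1 (.node A .timesE1 [.node (.conj A B) .timesI [d₁, d₂]]) d₁
  | lmfTimes2 {A B : GForm} {d₁ d₂ : PTree} :
      Red1 (.node B .timesE2 [.node (.conj A B) .timesI [d₁, d₂]]) d₂
  | lmfPlus1 {A B C : GForm} {d s₁ s₂ : PTree} :
      Red1 (.node C .plusE [.node (.disj A B) .plusI1 [d], s₁, s₂]) (s₁.replaceAssm A d)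
  | lmfPlus2 {A B C : GForm} {d s₁ s₂ : PTree} :
      Red1 (.node C .plusE [.node (.disj A B) .plusI2 [d], s₁, s₂]) (s₂.replaceAssm B d)
  | lmfSup {A B : GForm} {d₁ d₂ : PTree} :
      Red1 (.node B .supE [.node (.impl A B) .supI [d₁], d₂]) (d₁.replaceAssm A d₂)
  | lmfPiInd {A : GForm} {x : ℕ} {u : LTerm} {d : PTree} :
      Red1 (.node (A.substInd x u) .piE [.node (.pi (.ind x) A) .piI [d]])
        (d.mapF (GForm.substInd x u))
  | lmfPiXi {A : GForm} {α : LFormula} {i : ℕ} {τ : GTerm} {d : PTree} :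
      Red1 (.node (A.substXi α i τ) .piE [.node (.pi (.xi α i) A) .piI [d]])
        (d.mapF (GForm.substXi α i τ))
  | lmfPiFh {A : GForm} {β : LFormula} {x m : ℕ} {τ : GTerm} {d : PTree} :
      Red1 (.node (A.substFH β x m τ) .piE [.node (.pi (.fh β x m) A) .piI [d]])
        (d.mapF (GForm.substFH β x m τ))
  | lmfPiFf {A : GForm} {β : LFormula} {m : ℕ} {τ : GTerm} {d : PTree} :
      Red1 (.node (A.substFF β m τ) .piE [.node (.pi (.ff β m) A) .piI [d]])
        (d.mapF (GForm.substFF β m τ))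
  | lmfFrakEInd {A B : GForm} {x : ℕ} {u : LTerm} {d s : PTree} :
      d.concl = A.substInd x u →
      Red1 (.node B .frakEE [.node (.exi (.ind x) A) .frakEI [d], s])
        ((s.mapF (GForm.substInd x u)).replaceAssm (A.substInd x u) d)
  | lmfFrakEXi {A B : GForm} {α : LFormula} {i : ℕ} {τ : GTerm} {d s : PTree} :
      d.concl = A.substXi α i τ →
      Red1 (.node B .frakEE [.node (.exi (.xi α i) A) .frakEI [d], s])
        ((s.mapF (GForm.substXi α i τ)).replaceAssm (A.substXi α i τ) d)
  | lmfFrakEFh {A B : GForm} {β : LFormula} {x m : ℕ} {τ : GTerm} {d s : PTree} :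
      d.concl = A.substFH β x m τ →
      Red1 (.node B .frakEE [.node (.exi (.fh β x m) A) .frakEI [d], s])
        ((s.mapF (GForm.substFH β x m τ)).replaceAssm (A.substFH β x m τ) d)
  | lmfFrakEFf {A B : GForm} {β : LFormula} {m : ℕ} {τ : GTerm} {d s : PTree} :
      d.concl = A.substFF β m τ →
      Red1 (.node B .frakEE [.node (.exi (.ff β m) A) .frakEI [d], s])
        ((s.mapF (GForm.substFF β m τ)).replaceAssm (A.substFF β m τ) d)
  -- permutation functions
  | perm {B S : GForm} {er pr : RuleTag} {maj : PTree} {ms rest : List PTree} :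
      er.isMajorElim → pr.isPermElim →
      Red1 (.node B er (.node S pr (maj :: ms) :: rest))
        (.node B pr (maj :: ms.map fun mnr => .node B er (mnr :: rest)))

/-- Δ immediately reduces to Δ' (Δ ⪰ Δ'). -/
def RedEq (Δ Δ' : PTree) : Prop := Δ = Δ' ∨ Red1 Δ Δ'

/-- Δ reduces to Δ' (Δ ≻ Δ'): there is a finite chain Δ = Δ₁ ⪰ Δ₂ ⪰ ... ⪰ Δₙ = Δ'. -/
def Reduces (Δ Δ' : PTree) : Prop := Relation.ReflTransGen RedEq Δ Δ'

/-- The individual variables occurring unbound in (a formula occurrence of) a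
derivation. -/
def treeIndVars (Δ : PTree) : Set ℕ :=
  {x | ∃ p A, formulaAt Δ p = some A ∧ GVar.ind x ∈ A.fvar}

/-- `R` is a correct set of characteristic rules of a system of grounding: the premises and
conclusions of its rules are equivalences, and the rewrite equations are closed under
substitution of (all kinds of) variables by terms. -/
def CharRuleSet (R : Set (List GForm × GForm)) : Prop :=
  (∀ p c, (p, c) ∈ R →
    ((∀ P ∈ p, ∃ T U : GTerm, P = GForm.equiv T U) ∧ ∃ T U : GTerm, c = GForm.equiv T U)) ∧
  (∀ p c, (p, c) ∈ R →
    (∀ x u, (p.map (GForm.substInd x u), c.substInd x u) ∈ R) ∧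
    (∀ α i W, (p.map (GForm.substXi α i W), c.substXi α i W) ∈ R) ∧
    (∀ β x m U, (p.map (GForm.substFH β x m U), c.substFH β x m U) ∈ R) ∧
    (∀ β m U, (p.map (GForm.substFF β m U), c.substFF β m U) ∈ R))

/-- `u` lies strictly to the right of `v` in the derivation tree. -/
def BranchesRight (u v : Pos) : Prop :=
  ∃ w a b, a < b ∧ w ++ [a] <+: v ∧ w ++ [b] <+: u

lemma BranchesRight.mono {u u' v : Pos} (h : BranchesRight u v) (hu : u <+: u') :
    BranchesRight u' v :=
  let ⟨w, a, b, hab, hv, hu'⟩ := h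
  ⟨w, a, b, hab, hv, hu'.trans hu⟩

lemma branchesRight_concat (b : Pos) {m : ℕ} (hm : 0 < m) :
    BranchesRight (b ++ [m]) (b ++ [0]) :=
  ⟨b, 0, m, hm, List.prefix_refl _, List.prefix_refl _⟩

lemma BranchesRight.not_prefix_of_prefix {u v l : Pos} (h : BranchesRight u v) (hu : u <+: l)
    (hv : v <+: l) : False := by
  obtain ⟨w, a, b, hab, hwa, hwb⟩ := h
  have hpre : w ++ [a] <+: w ++ [b] :=
    List.prefix_of_prefix_length_le (hwa.trans hv) (hwb.trans hu) (by simp)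
  rw [List.prefix_append_right_inj, List.singleton_prefix_cons_iff] at hpre
  omega

lemma BranchesRight.false_of_prefix {u v x h : Pos} (hr : BranchesRight u v) (hv : v <+: x)
    (hx : x <+: h) (hu : u <+: h) : False := by
  rcases List.prefix_or_prefix_of_prefix hx hu with hxu | hux
  · exact hr.not_prefix_of_prefix (List.prefix_refl u) (hv.trans hxu)
  · exact hr.not_prefix_of_prefix hux hv

lemma BranchesRight.sibling {c v b : Pos} {m : ℕ} (hr : BranchesRight c v)
    (hc : b ++ [0] <+: c ∨ c <+: b) (hm : 0 < m) : BranchesRight (b ++ [m]) v := by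
  rcases hc with hbc | hcb
  · obtain ⟨w, a, a', haa', hwa, hwa'⟩ := hr
    have ha' : a' ≠ 0 := by omega
    rcases List.prefix_or_prefix_of_prefix hbc hwa' with hbw | hwb
    · rcases List.prefix_concat_iff.mp hbw with h | h
      · exact absurd (by simpa using (List.append_inj' h rfl).2.symm) ha'
      · exact ⟨b, 0, m, hm, (h.trans (List.prefix_append _ _)).trans hwa, List.prefix_refl _⟩
    · rcases List.prefix_concat_iff.mp hwb with h | h
      · exact absurd (by simpa using (List.append_inj' h rfl).2) ha'
      · exact ⟨w, a, a', haa', hwa, h.trans (List.prefix_append _ _)⟩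
  · exact hr.mono (hcb.trans (List.prefix_append _ _))

lemma PTree.length_lt_sizeOf_of_sub {p : Pos} : ∀ {t t' : PTree}, t.sub p = some t' →
    p.length < sizeOf t := by
  induction p with
  | nil =>
    rintro ⟨A, r, l⟩ t' -
    simp only [List.length_nil, PTree.node.sizeOf_spec]
    omega
  | cons k p ih =>
    rintro ⟨A, r, l⟩ t' h
    obtain ⟨c, hc, hsub⟩ := Option.bind_eq_some_iff.mp (by simpa only [PTree.sub] using h)
    have hcl := List.sizeOf_lt_of_mem (List.mem_of_getElem? hc)
    have hpc := ih hsub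
    simp only [PTree.node.sizeOf_spec, List.length_cons]
    omega

lemma SideConnected.eq_sibling {Δ : PTree} {b q : Pos} (h : SideConnected Δ (b ++ [0]) q) :
    ∃ m, 0 < m ∧ q = b ++ [m] := by
  obtain ⟨-, -, r, k, m, hkm, hp, rfl⟩ := h
  obtain ⟨rfl, hk⟩ := List.append_inj' hp rfl
  obtain rfl : k = 0 := by simpa using hk.symm
  exact ⟨m, by omega, rfl⟩

namespace IsCutSeg

variable {Δ : PTree} {σ : List Pos} {A : GForm}

lemma pairwise_prefix (h : IsCutSeg Δ σ A) : σ.Pairwise fun p q => q <+: p :=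
  @List.IsChain.pairwise _ _ _ ⟨fun hpq hqr => hqr.trans hpq⟩
    (h.2.2.2.imp fun _ _ hpq => let ⟨k, _, hk⟩ := hpq.1; ⟨[k], hk⟩)

lemma prefix_head (h : IsCutSeg Δ σ A) {hd x : Pos} (hhd : σ.head? = some hd) (hx : x ∈ σ) :
    x <+: hd := by
  obtain ⟨t, rfl⟩ := List.head?_eq_some_iff.mp hhd
  rcases List.mem_cons.mp hx with rfl | hx
  · exact List.prefix_refl _
  · exact (List.pairwise_cons.mp h.pairwise_prefix).1 x hx

lemma getLast_prefix (h : IsCutSeg Δ σ A) {l x : Pos} (hl : σ.getLast? = some l) (hx : x ∈ σ) :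
    l <+: x := by
  obtain ⟨t, rfl⟩ := List.getLast?_eq_some_iff.mp hl
  rcases List.mem_append.mp hx with hx | hx
  · exact (List.pairwise_append.mp h.pairwise_prefix).2.2 x hx l (List.mem_singleton_self l)
  · rw [List.mem_singleton.mp hx]

lemma exists_edges (h : IsCutSeg Δ σ A) :
    ∃ hd b, σ.head? = some hd ∧ σ.getLast? = some (b ++ [0]) := by
  obtain ⟨-, -, ⟨hd, -, hhd, -, -, _, b, -, hl, rfl, -⟩, -⟩ := h
  exact ⟨hd, b, hhd, hl⟩

lemma length_lt_sizeOf (h : IsCutSeg Δ σ A) {x : Pos} (hx : x ∈ σ) : x.length < sizeOf Δ := by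
  obtain ⟨t, ht, -⟩ := Option.map_eq_some_iff.mp (h.2.1 x hx)
  exact PTree.length_lt_sizeOf_of_sub ht

end IsCutSeg

lemma RightRel.exists_sibling {Δ : PTree} {σ₁ σ₂ : List Pos} {A₂ : GForm} {b₁ b₂ hd₂ : Pos}
    (hr : RightRel Δ σ₁ σ₂) (h₂ : IsCutSeg Δ σ₂ A₂) (hl₁ : σ₁.getLast? = some (b₁ ++ [0]))
    (hhd₂ : σ₂.head? = some hd₂) (hl₂ : σ₂.getLast? = some (b₂ ++ [0])) :
    ∃ m, 0 < m ∧ b₁ ++ [m] <+: hd₂ ∧ (b₂ ++ [0] <+: b₁ ++ [m] ∨ b₁ ++ [m] <+: b₂) := by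
  obtain ⟨p, hp, hq⟩ := hr
  obtain rfl : p = b₁ ++ [0] := Option.some.inj (hp.symm.trans hl₁)
  rcases hq with ⟨q, hq, hsc⟩ | ⟨q, r, hr, ⟨hqr, hrq⟩, hsc⟩
  · obtain ⟨m, hm, rfl⟩ := hsc.eq_sibling
    exact ⟨m, hm, h₂.prefix_head hhd₂ hq, Or.inl (h₂.getLast_prefix hl₂ hq)⟩
  · obtain ⟨m, hm, rfl⟩ := hsc.eq_sibling
    obtain rfl : r = b₂ ++ [0] := Option.some.inj (hr.symm.trans hl₂)
    have hq : b₁ ++ [m] <+: b₂ := (List.prefix_concat_iff.mp hrq).resolve_left hqr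
    refine ⟨m, hm, ?_, Or.inr hq⟩
    exact (hq.trans (List.prefix_append _ _)).trans
      (h₂.prefix_head hhd₂ (List.mem_of_getLast? hl₂))

lemma branchesRight_of_rightRel_chain {Δ : PTree} {σs : ℕ → List Pos} {As : ℕ → GForm}
    {i n : ℕ} (hin : i ≤ n) (hseg : ∀ j, i ≤ j → j ≤ n → IsCutSeg Δ (σs j) (As j))
    (hrel : ∀ j, i ≤ j → j < n → RightRel Δ (σs j) (σs (j + 1))) {bᵢ bₙ : Pos}
    (hlᵢ : (σs i).getLast? = some (bᵢ ++ [0])) (hlₙ : (σs n).getLast? = some (bₙ ++ [0]))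
    {m : ℕ} (hm : 0 < m) : BranchesRight (bₙ ++ [m]) (bᵢ ++ [0]) := by
  induction n, hin using Nat.le_induction generalizing bₙ m with
  | base =>
    obtain rfl : bₙ = bᵢ := (List.append_inj' (Option.some.inj (hlₙ.symm.trans hlᵢ)) rfl).1
    exact branchesRight_concat bₙ hm
  | succ n hin ih =>
    obtain ⟨hd, b, hhd, hl⟩ := (hseg (n + 1) (by omega) le_rfl).exists_edges
    obtain rfl : b = bₙ := (List.append_inj' (Option.some.inj (hl.symm.trans hlₙ)) rfl).1
    obtain ⟨-, b', -, hl'⟩ := (hseg n hin (by omega)).exists_edges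
    obtain ⟨m', hm', -, hpos⟩ :=
      (hrel n hin (by omega)).exists_sibling (hseg (n + 1) (by omega) le_rfl) hl' hhd hl
    exact (ih (fun j hij hjn => hseg j hij (by omega)) (fun j hij hjn => hrel j hij (by omega))
      hl' hm').sibling hpos hm

lemma exists_isTmcs_prefix_head {Δ : PTree} {c : Pos} :
    ∀ {σ : List Pos} {A : GForm} {hd : Pos}, IsCutSeg Δ σ A → IsMaxMeas Δ A.meas →
      σ.head? = some hd → c <+: hd →
      ∃ σ' A' hd', IsTmcs Δ σ' A' ∧ σ'.head? = some hd' ∧ c <+: hd' := by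
  intro σ A hd hσ hmax hhd hc
  -- If `σ` is not topmost, a segment of equal measure starts strictly higher; heights of
  -- occurrences are bounded by `sizeOf Δ`.
  induction hk : sizeOf Δ - hd.length using Nat.strong_induction_on generalizing σ A hd with
  | _ k ih =>
    by_cases htop : ∀ σ' A', IsCutSeg Δ σ' A' → A'.meas = A.meas →
        ∀ p q, σ'.getLast? = some p → σ.head? = some q → ¬ StandsAbove p q
    · exact ⟨σ, A, hd, ⟨hσ, hmax, htop⟩, hhd, hc⟩
    push Not at htop
    obtain ⟨σ', A', hσ', hmeas, p, q, hp, hq, hqp, hpre⟩ := htop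
    obtain rfl : q = hd := Option.some.inj (hq.symm.trans hhd)
    obtain ⟨hd', -, hhd', -⟩ := hσ'.exists_edges
    have hp' : p <+: hd' := hσ'.prefix_head hhd' (List.mem_of_getLast? hp)
    have hlt : q.length < hd'.length :=
      (lt_of_le_of_ne hpre.length_le fun h => hqp (hpre.eq_of_length h)).trans_le hp'.length_le
    have hbound := hσ'.length_lt_sizeOf (List.mem_of_head? hhd')
    exact ih _ (by omega) hσ' (hmeas ▸ hmax) hhd' (hc.trans (hpre.trans hp')) rfl

lemma segDisjoint_of_branchesRight {Δ : PTree} {σ σ' : List Pos} {A A' : GForm}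
    {b hd' c : Pos} (hσ : IsCutSeg Δ σ A) (hσ' : IsCutSeg Δ σ' A')
    (hl : σ.getLast? = some (b ++ [0])) (hhd' : σ'.head? = some hd') (hc : c <+: hd')
    (hr : BranchesRight c (b ++ [0])) : SegDisjoint σ σ' := fun _ hx hx' =>
  hr.false_of_prefix (hσ.getLast_prefix hl hx) (hσ'.prefix_head hhd' hx') hc

/-- The new segment is taken topmost among those of maximal measure starting above the right
sibling of the lower edge of `σₙ` that `σₓ` provides. Along the chain, that sibling lies to the
right of every earlier lower edge, which keeps the new segment apart from the old ones. -/
lemma exists_isTmcs_segDisjoint_of_rightRel_chain {Δ : PTree} {n : ℕ} {σs : ℕ → List Pos}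
    {As : ℕ → GForm} (hn : 1 ≤ n) (htm : ∀ i, 1 ≤ i → i ≤ n → IsTmcs Δ (σs i) (As i))
    (hrel : ∀ i, 1 ≤ i → i < n → RightRel Δ (σs i) (σs (i + 1))) {σₓ : List Pos} {Aₓ : GForm}
    (hσₓ : IsCutSeg Δ σₓ Aₓ) (hmeas : Aₓ.meas = (As n).meas) (hrₓ : RightRel Δ (σs n) σₓ) :
    ∃ σ A, IsTmcs Δ σ A ∧ ∀ i, 1 ≤ i → i ≤ n → SegDisjoint (σs i) σ := by
  obtain ⟨-, bₙ, -, hlₙ⟩ := (htm n hn le_rfl).1.exists_edges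
  obtain ⟨hdₓ, bₓ, hhdₓ, hlₓ⟩ := hσₓ.exists_edges
  obtain ⟨m, hm, hc, -⟩ := hrₓ.exists_sibling hσₓ hlₙ hhdₓ hlₓ
  obtain ⟨σ, A, hd, hσ, hhd, hcσ⟩ :=
    exists_isTmcs_prefix_head hσₓ (hmeas ▸ (htm n hn le_rfl).2.1) hhdₓ hc
  refine ⟨σ, A, hσ, fun i hi hin => ?_⟩
  obtain ⟨-, bᵢ, -, hlᵢ⟩ := (htm i hi hin).1.exists_edges
  have hseg j (hij : i ≤ j) (hjn : j ≤ n) := (htm j (hi.trans hij) hjn).1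
  exact segDisjoint_of_branchesRight (htm i hi hin).1 hσ.1 hlᵢ hhd hcσ
    (branchesRight_of_rightRel_chain hin hseg (fun j hij hjn => hrel j (hi.trans hij) hjn)
      hlᵢ hlₙ hm)

theorem disjoint_tmcs_general (Δ : PTree) :
    (∀ σ1 A1, IsTmcs Δ σ1 A1 →
      (∃ σs As, IsCutSeg Δ σs As ∧ GForm.meas As = GForm.meas A1 ∧ RightRel Δ σ1 σs) →
      ∃ σ2 A2, IsTmcs Δ σ2 A2 ∧ SegDisjoint σ1 σ2)
    ∧ ∀ (n : ℕ) (σs : ℕ → List Pos) (As : ℕ → GForm), 1 ≤ n →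
        (∀ i, 1 ≤ i → i ≤ n → IsTmcs Δ (σs i) (As i)) →
        (∀ i j, 1 ≤ i → i < j → j ≤ n → SegDisjoint (σs i) (σs j)) →
        (∀ i, 1 ≤ i → i < n →
          GForm.meas (As (i + 1)) = GForm.meas (As i) ∧ RightRel Δ (σs i) (σs (i + 1))) →
        (∃ σx Ax, IsCutSeg Δ σx Ax ∧ GForm.meas Ax = GForm.meas (As n) ∧
          RightRel Δ (σs n) σx) →
        ∃ σn1 An1, IsTmcs Δ σn1 An1 ∧ ∀ i, 1 ≤ i → i ≤ n → SegDisjoint (σs i) σn1 := by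
  refine ⟨fun σ1 A1 h1 ⟨σₓ, Aₓ, hσₓ, hmeas, hrₓ⟩ => ?_,
    fun n σs As hn htm _ hrel ⟨σₓ, Aₓ, hσₓ, hmeas, hrₓ⟩ =>
      exists_isTmcs_segDisjoint_of_rightRel_chain hn htm (fun i hi hin => (hrel i hi hin).2)
        hσₓ hmeas hrₓ⟩
  obtain ⟨σ2, A2, h2, hdisj⟩ := exists_isTmcs_segDisjoint_of_rightRel_chain (n := 1)
    (σs := fun _ => σ1) (As := fun _ => A1) le_rfl (fun _ _ _ => h1) (fun _ _ _ => by omega)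
    hσₓ hmeas hrₓ
  exact ⟨σ2, A2, h2, hdisj 1 le_rfl le_rfl⟩

/-- given a non-normal derivation Δ in a system of grounding Σ and a topmost
maximal cut-segment (tmcs) σ¹ of Δ, if there is a cut-segment σ* with μ(σ*) = μ(σ¹) such
that the lower edge of σ¹ is side-connected either with an occurrence in σ* or with a
formula occurrence standing below the lower edge of σ*, then there is a tmcs σ² of Δ
disjoint from σ¹.  Moreover, if σ¹, ..., σⁿ is a sequence of pairwise disjoint tmcs of Δ
such that each σ^{i+1} stands to σ^i in the above relation, and there is a cut-segment σ**
standing to σⁿ in the above relation, then there is a tmcs σ^{n+1} of Δ disjoint from each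
σ^i (1 ≤ i ≤ n). -/
theorem disjoint_tmcs (base : ℕ → LFormula) (R : Set (List GForm × GForm))
    (hR : CharRuleSet R) (Γ : Set GForm) (Δ : PTree)
    (hval : Valid base R Γ Δ) (hnn : NonNormal Δ) :
    (∀ σ1 A1, IsTmcs Δ σ1 A1 →
      (∃ σs As, IsCutSeg Δ σs As ∧ GForm.meas As = GForm.meas A1 ∧ RightRel Δ σ1 σs) →
      ∃ σ2 A2, IsTmcs Δ σ2 A2 ∧ SegDisjoint σ1 σ2)
    ∧ ∀ (n : ℕ) (σs : ℕ → List Pos) (As : ℕ → GForm), 1 ≤ n →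
        (∀ i, 1 ≤ i → i ≤ n → IsTmcs Δ (σs i) (As i)) →
        (∀ i j, 1 ≤ i → i < j → j ≤ n → SegDisjoint (σs i) (σs j)) →
        (∀ i, 1 ≤ i → i < n →
          GForm.meas (As (i + 1)) = GForm.meas (As i) ∧ RightRel Δ (σs i) (σs (i + 1))) →
        (∃ σx Ax, IsCutSeg Δ σx Ax ∧ GForm.meas Ax = GForm.meas (As n) ∧
          RightRel Δ (σs n) σx) →
        ∃ σn1 An1, IsTmcs Δ σn1 An1 ∧ ∀ i, 1 ≤ i → i ≤ n → SegDisjoint (σs i) σn1 :=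
  disjoint_tmcs_general Δ

end

end Grounding
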